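/- Let m, k be integers with 1 ≤ k ≤ m, let S be a nonempty subset of {1,...,k}, and let f_{(m,k)} be the associated function on 𝔽_3^m. Then the real part of the Walsh transform of f_{(m,k)} at the zero vector equals 3^m - (3/2)·Σ_{j=1}^{k} 2^j·C(m, j). -/

import Mathlib

open Finset

/-- `ζ = exp(2πi/3)`, a primitive cube root of unity. -/
noncomputable def zeta3 : ℂ := Complex.exp (2 * Real.pi * Complex.I / 3)

/-- The Walsh transform of `h : 𝔽_3^m → 𝔽_3` at `w ∈ 𝔽_3^m`:
`ĥ(w) = Σ_{x ∈ 𝔽_3^m} ζ^{h(x) - w·x}`. -/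
noncomputable def walsh {m : ℕ} (h : (Fin m → ZMod 3) → ZMod 3)
    (w : Fin m → ZMod 3) : ℂ :=
  ∑ x : Fin m → ZMod 3, zeta3 ^ (h x - ∑ i, w i * x i).val

/-- The function `f_{(m,k)} : 𝔽_3^m → 𝔽_3` attached to a subset `S ⊆ {1,…,k}`:
`-1` if `wt(x) ∈ S`, `1` if `wt(x) ∈ {1,…,k} \ S`, `0` otherwise. -/
def fmk {m : ℕ} (k : ℕ) (S : Finset ℕ) (x : Fin m → ZMod 3) : ZMod 3 :=
  if hammingNorm x ∈ S then -1
  else if hammingNorm x ∈ Finset.Icc 1 k then 1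
  else 0

/-!
Since `ζ` is a primitive cube root of unity, `Re ζ^v` is `1` for `v = 0` and `-1/2` otherwise.
As `S ⊆ {1,…,k}`, `f_{(m,k)}(x)` vanishes exactly when `wt(x) ∉ {1,…,k}`, so the real part is
`3^m - (3/2)·#{x : 1 ≤ wt(x) ≤ k}`. There are `C(m,j)·2^j` words of weight `j`: choose the
support, then one of the two nonzero entries at each of its `j` positions.
-/

section HammingWeight

variable {ι α : Type*} [Fintype ι] [DecidableEq ι] [Zero α] [Fintype α] [DecidableEq α]

theorem card_filter_support_eq (s : Finset ι) :
    #{x : ι → α | ({i | x i ≠ 0} : Finset ι) = s} = (Fintype.card α - 1) ^ #s := by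
  have hfiber : ({x : ι → α | ({i | x i ≠ 0} : Finset ι) = s} : Finset (ι → α)) =
      Fintype.piFinset fun i => if i ∈ s then univ.erase 0 else {0} := by
    ext x
    simp only [mem_filter, mem_univ, true_and, Fintype.mem_piFinset, Finset.ext_iff]
    refine forall_congr' fun i => ?_
    split_ifs with hi <;> simp [hi]
  rw [hfiber, Fintype.card_piFinset]
  simp only [apply_ite card, card_erase_of_mem (mem_univ _), card_univ, card_singleton]
  rw [Fintype.prod_ite_mem, prod_const]

theorem card_hammingNorm_eq (j : ℕ) :
    #{x : ι → α | hammingNorm x = j} = (Fintype.card ι).choose j * (Fintype.card α - 1) ^ j := by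
  have hfiber : ∀ s ∈ powersetCard j univ,
      #{x ∈ ({x : ι → α | hammingNorm x = j} : Finset _) | ({i | x i ≠ 0} : Finset ι) = s} =
        (Fintype.card α - 1) ^ j := by
    intro s hs
    rw [mem_powersetCard_univ] at hs
    rw [filter_filter, ← hs, ← card_filter_support_eq]
    refine congrArg card <| filter_congr fun x _ => ⟨And.right, fun h => ⟨?_, h⟩⟩
    rw [hammingNorm, h]
  rw [card_eq_sum_card_fiberwise (f := fun x : ι → α => ({i | x i ≠ 0} : Finset ι))
      (t := powersetCard j univ) fun x hx => by simpa [hammingNorm] using hx,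
    sum_congr rfl hfiber, sum_const, card_powersetCard, card_univ, smul_eq_mul]

theorem card_hammingNorm_mem (t : Finset ℕ) :
    #{x : ι → α | hammingNorm x ∈ t} =
      ∑ j ∈ t, (Fintype.card ι).choose j * (Fintype.card α - 1) ^ j := by
  rw [card_eq_sum_card_fiberwise (f := hammingNorm) (t := t) fun x hx => by simpa using hx]
  refine sum_congr rfl fun j hj => ?_
  rw [filter_filter, ← card_hammingNorm_eq]
  exact congrArg card <| filter_congr fun x _ => ⟨And.right, fun h => ⟨h ▸ hj, h⟩⟩

end HammingWeight

theorem zeta3_pow_re (n : ℕ) : (zeta3 ^ n).re = Real.cos (2 * Real.pi * n / 3) := by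
  rw [zeta3, ← Complex.exp_nat_mul,
    show (n : ℂ) * (2 * Real.pi * Complex.I / 3) = ((2 * Real.pi * n / 3 : ℝ) : ℂ) * Complex.I by
      push_cast; ring,
    Complex.exp_ofReal_mul_I_re]

theorem zeta3_pow_val_re (a : ZMod 3) : (zeta3 ^ a.val).re = if a = 0 then 1 else -1 / 2 := by
  rw [zeta3_pow_re]
  fin_cases a
  · show Real.cos (2 * Real.pi * (0 : ℕ) / 3) = if (0 : ZMod 3) = 0 then 1 else -1 / 2
    simp
  · show Real.cos (2 * Real.pi * (1 : ℕ) / 3) = if (1 : ZMod 3) = 0 then 1 else -1 / 2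
    rw [show 2 * Real.pi * (1 : ℕ) / 3 = Real.pi - Real.pi / 3 by push_cast; ring,
      Real.cos_pi_sub, Real.cos_pi_div_three, if_neg (by decide)]
    norm_num
  · show Real.cos (2 * Real.pi * (2 : ℕ) / 3) = if (2 : ZMod 3) = 0 then 1 else -1 / 2
    rw [show 2 * Real.pi * (2 : ℕ) / 3 = Real.pi / 3 + Real.pi by push_cast; ring,
      Real.cos_add_pi, Real.cos_pi_div_three, if_neg (by decide)]
    norm_num

theorem fmk_eq_zero_iff {m k : ℕ} {S : Finset ℕ} (hS : S ⊆ Icc 1 k) (x : Fin m → ZMod 3) :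
    fmk k S x = 0 ↔ hammingNorm x ∉ Icc 1 k := by
  unfold fmk
  split_ifs with hxS hxk
  · simp [hS hxS]
  · simp [hxk]
  · simp [hxk]

theorem stmt_6 (m k : ℕ)
    (S : Finset ℕ) (hSsub : S ⊆ Finset.Icc 1 k) :
    (walsh (fmk (m := m) k S) 0).re =
      3 ^ m - 3 / 2 * ∑ j ∈ Finset.Icc 1 k, (2 : ℝ) ^ j * (m.choose j : ℝ) := by
  have hre : ∀ x : Fin m → ZMod 3, (zeta3 ^ (fmk k S x).val).re =
      1 - 3 / 2 * if hammingNorm x ∈ Icc 1 k then 1 else 0 := by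
    intro x
    simp only [zeta3_pow_val_re, fmk_eq_zero_iff hSsub]
    split_ifs <;> norm_num
  have hcount : #{x : Fin m → ZMod 3 | hammingNorm x ∈ Icc 1 k} =
      ∑ j ∈ Icc 1 k, 2 ^ j * m.choose j := by
    simpa [mul_comm] using card_hammingNorm_mem (ι := Fin m) (α := ZMod 3) (Icc 1 k)
  simp only [walsh, Pi.zero_apply, zero_mul, sum_const_zero, sub_zero, Complex.re_sum, hre]
  rw [sum_sub_distrib, ← mul_sum, sum_boole, hcount]
  simp
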